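/- arXiv:0908.0153 — 2 statements merged into one kernel-verified Lean document; each statement's English description precedes it below -/
import Mathlib

section
/- Let m ≥ 1 and let b_1, …, b_m be integers with b_i ≡ 2 (mod 4) for all i; write a_i = b_i/2 (so each a_i is odd). Then the polynomial ∇(z) = (1,0) · (∏_{i=1}^m [[(−1)^i a_i z, 1],[1,0]]) · (1,0)ᵀ ∈ ℤ[z] is congruent modulo 2 to the Fibonacci polynomial f_{m+1}(z), i.e. the images of ∇ and f_{m+1} in (ℤ/2ℤ)[z] coincide. (By Conway's formula, ∇ is the Conway polynomial of the rational link C(b_1,…,b_m).) -/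
/-!
Modulo 2 the signs disappear and every odd `a_i` becomes `1`, so each factor of the product
reduces to the Fibonacci matrix `[[z, 1], [1, 0]]`. The product is then its `m`-th power, whose
upper left entry is `f_{m+1}`.
-/

open Polynomial

/-- The Fibonacci polynomials `f₀ = 0`, `f₁ = 1`, `f_{m+1} = z f_m + f_{m-1}`. -/
noncomputable def fibPoly : ℕ → Polynomial ℤ
  | 0 => 0
  | 1 => 1
  | (m + 2) => X * fibPoly (m + 1) + fibPoly m

theorem fibPoly_add_two (n : ℕ) : fibPoly (n + 2) = X * fibPoly (n + 1) + fibPoly n := rfl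

theorem fibMatrix_pow_succ (n : ℕ) :
    (!![X, 1; 1, 0] : Matrix (Fin 2) (Fin 2) ℤ[X]) ^ (n + 1) =
      !![fibPoly (n + 2), fibPoly (n + 1); fibPoly (n + 1), fibPoly n] := by
  induction n with
  | zero => simp [fibPoly]
  | succ n ih =>
    rw [pow_succ, ih, fibPoly_add_two (n + 1), fibPoly_add_two n]
    ext i j : 1
    fin_cases i <;> fin_cases j <;> simp <;> ring

theorem fibMatrix_pow_apply_zero_zero (n : ℕ) :
    ((!![X, 1; 1, 0] : Matrix (Fin 2) (Fin 2) ℤ[X]) ^ n) 0 0 = fibPoly (n + 1) := by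
  cases n with
  | zero => simp [fibPoly]
  | succ n => simp [fibMatrix_pow_succ]

theorem mapMatrix_fibMatrix {R S : Type*} [CommRing R] [CommRing S] (f : R →+* S) :
    (mapRingHom f).mapMatrix (!![X, 1; 1, 0] : Matrix (Fin 2) (Fin 2) R[X]) = !![X, 1; 1, 0] := by
  ext i j : 1
  fin_cases i <;> fin_cases j <;> simp

theorem Int.odd_ediv_two_of_emod_four_eq_two {b : ℤ} (hb : b % 4 = 2) : Odd (b / 2) :=
  ⟨b / 4, by omega⟩

theorem mapMatrix_zmodTwo_signed_odd {a : ℤ} (ha : Odd a) (k : ℕ) :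
    (mapRingHom (Int.castRingHom (ZMod 2))).mapMatrix
        (!![(-1) ^ k * C a * X, 1; 1, 0] : Matrix (Fin 2) (Fin 2) ℤ[X]) =
      !![X, 1; 1, 0] := by
  have ha' : (a : (ZMod 2)[X]) = 1 := by
    rw [← map_intCast (C : ZMod 2 →+* (ZMod 2)[X]), ha.intCast_zmod_two, C_1]
  ext i j : 1
  fin_cases i <;> fin_cases j <;> simp [ha', CharTwo.neg_eq]

theorem conway_poly_mod_two_of_two_mod_four_general (m : ℕ)
    (b : Fin m → ℤ) (hb : ∀ i, b i % 4 = 2) :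
    Polynomial.map (Int.castRingHom (ZMod 2))
        (((List.ofFn fun i : Fin m =>
            (!![(-1) ^ ((i : ℕ) + 1) * C (b i / 2) * X, 1; 1, 0] :
              Matrix (Fin 2) (Fin 2) (Polynomial ℤ))).prod) 0 0) =
      Polynomial.map (Int.castRingHom (ZMod 2)) (fibPoly (m + 1)) := by
  set φ := (mapRingHom (Int.castRingHom (ZMod 2))).mapMatrix (m := Fin 2)
  have hprod : φ (List.ofFn fun i : Fin m =>
      (!![(-1) ^ ((i : ℕ) + 1) * C (b i / 2) * X, 1; 1, 0] :
        Matrix (Fin 2) (Fin 2) ℤ[X])).prod = φ (!![X, 1; 1, 0] ^ m) := by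
    simp only [φ, map_list_prod, List.map_ofFn, Function.comp_def,
      mapMatrix_zmodTwo_signed_odd (Int.odd_ediv_two_of_emod_four_eq_two (hb _)),
      List.ofFn_const, List.prod_replicate, map_pow, mapMatrix_fibMatrix]
  simpa only [φ, RingHom.mapMatrix_apply, Matrix.map_apply, coe_mapRingHom,
    fibMatrix_pow_apply_zero_zero] using congrFun (congrFun hprod 0) 0

/-- if `b_1, …, b_m` are integers with `b_i ≡ 2 (mod 4)` and `a_i = b_i / 2`,
then the Conway polynomial `∇(z) = (1,0)·(∏_{i=1}^m [[(-1)^i a_i z, 1],[1,0]])·(1,0)ᵀ`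
of the rational link `C(b_1,…,b_m)` is congruent to `f_{m+1}(z)` modulo 2. -/
theorem conway_poly_mod_two_of_two_mod_four (m : ℕ) (hm : 1 ≤ m)
    (b : Fin m → ℤ) (hb : ∀ i, b i % 4 = 2) :
    Polynomial.map (Int.castRingHom (ZMod 2))
        (((List.ofFn fun i : Fin m =>
            (!![(-1) ^ ((i : ℕ) + 1) * C (b i / 2) * X, 1; 1, 0] :
              Matrix (Fin 2) (Fin 2) (Polynomial ℤ))).prod) 0 0) =
      Polynomial.map (Int.castRingHom (ZMod 2)) (fibPoly (m + 1)) :=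
  conway_poly_mod_two_of_two_mod_four_general m b hb
end

section
/- Let n be an integer with n ≡ 2 (mod 4) and j ≥ 1, and set a = n/2 (an odd integer). Then the polynomial ∇(z) = (1,0) · (∏_{i=1}^j [[(−1)^i a z, 1],[1,0]]) · (1,0)ᵀ ∈ ℤ[z] is congruent modulo 2 to the Fibonacci polynomial f_{j+1}(z). (By Conway's formula, ∇ is the Conway polynomial of the generalized Fibonacci link F_j^{(n)} = C(n,…,n) with j quotients.) -/
open Polynomial

noncomputable def A : Matrix (Fin 2) (Fin 2) (Polynomial (ZMod 2)) := !![X, 1; 1, 0]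

noncomputable def g (m : ℕ) : Polynomial (ZMod 2) :=
  Polynomial.map (Int.castRingHom (ZMod 2)) (fibPoly m)

lemma g_zero : g 0 = 0 := by simp [g, fibPoly]
lemma g_one : g 1 = 1 := by simp [g, fibPoly]
lemma g_rec (m : ℕ) : g (m + 2) = X * g (m + 1) + g m := by
  simp [g, fibPoly, Polynomial.map_add, Polynomial.map_mul]

lemma A_pow (k : ℕ) : A ^ (k + 1) = !![g (k + 2), g (k + 1); g (k + 1), g k] := by
  induction k with
  | zero =>
    rw [pow_one, A, g_zero, g_one, g_rec 0, g_zero, g_one]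
    ring_nf
  | succ k ih =>
    rw [pow_succ, ih, A]
    ext i j
    fin_cases i <;> fin_cases j <;>
      simp [Matrix.mul_apply, Fin.sum_univ_two, g_rec] <;> try ring

/-- if `n ≡ 2 (mod 4)`, `j ≥ 1` and `a = n/2`, then the Conway
polynomial `∇(z) = (1,0)·(∏_{i=1}^j [[(-1)^i a z, 1],[1,0]])·(1,0)ᵀ` of the
generalized Fibonacci link `F_j^{(n)} = C(n,…,n)` is congruent to `f_{j+1}(z)` mod 2. -/
theorem conway_poly_fibonacci_link_two_mod_four (n : ℤ) (hn : n % 4 = 2)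
    (j : ℕ) (hj : 1 ≤ j) :
    Polynomial.map (Int.castRingHom (ZMod 2))
        (((List.ofFn fun i : Fin j =>
            (!![(-1) ^ ((i : ℕ) + 1) * C (n / 2) * X, 1; 1, 0] :
              Matrix (Fin 2) (Fin 2) (Polynomial ℤ))).prod) 0 0) =
      Polynomial.map (Int.castRingHom (ZMod 2)) (fibPoly (j + 1)) := by
  set φ := Polynomial.mapRingHom (Int.castRingHom (ZMod 2)) with hφ
  have hcast : ((n / 2 : ℤ) : ZMod 2) = 1 := by
    have h2 : (n / 2) % 2 = 1 := by omega
    calc ((n / 2 : ℤ) : ZMod 2) = (((n / 2) % (2:ℕ) : ℤ) : ZMod 2) := by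
          rw [ZMod.intCast_mod]
      _ = 1 := by norm_num [h2]
  have key : φ.mapMatrix ((List.ofFn fun i : Fin j =>
      (!![(-1) ^ ((i : ℕ) + 1) * C (n / 2) * X, 1; 1, 0] :
        Matrix (Fin 2) (Fin 2) (Polynomial ℤ))).prod) = A ^ j := by
    rw [map_list_prod]
    have : (List.ofFn fun i : Fin j =>
        (!![(-1) ^ ((i : ℕ) + 1) * C (n / 2) * X, 1; 1, 0] :
          Matrix (Fin 2) (Fin 2) (Polynomial ℤ))).map φ.mapMatrix =
        List.replicate j A := by
      rw [List.map_ofFn]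
      have : ∀ i : Fin j, φ.mapMatrix
          (!![(-1) ^ ((i : ℕ) + 1) * C (n / 2) * X, 1; 1, 0] :
            Matrix (Fin 2) (Fin 2) (Polynomial ℤ)) = A := by
        intro i
        ext a b
        fin_cases a <;> fin_cases b <;>
          simp [A, φ, Polynomial.map_mul, Polynomial.map_pow, hcast, CharTwo.neg_eq]
      have h2 : (⇑φ.mapMatrix ∘ fun i : Fin j =>
          (!![(-1) ^ ((i : ℕ) + 1) * C (n / 2) * X, 1; 1, 0] :
            Matrix (Fin 2) (Fin 2) (Polynomial ℤ))) = fun _ => A := funext this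
      rw [h2, List.ofFn_const]
    rw [this, List.prod_replicate]
  obtain ⟨k, rfl⟩ : ∃ k, j = k + 1 := ⟨j - 1, by omega⟩
  have lhs_eq : Polynomial.map (Int.castRingHom (ZMod 2))
      (((List.ofFn fun i : Fin (k+1) =>
        (!![(-1) ^ ((i : ℕ) + 1) * C (n / 2) * X, 1; 1, 0] :
          Matrix (Fin 2) (Fin 2) (Polynomial ℤ))).prod) 0 0) =
      (A ^ (k + 1)) 0 0 := by
    rw [← key]; rfl
  rw [lhs_eq, A_pow]
  simp [g]
end
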